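/- Assume 0<h<2. If (σ,Tσ) is a stable pair, i.e. Tσ≠σ and T(Tσ)=σ, then σ and Tσ have the same energy: E(σ)=E(Tσ). -/

import Mathlib

open scoped BigOperators Classical
open Filter

namespace PCA

/-- Sites of the two-dimensional discrete torus of side `L`. -/
abbrev Site (L : ℕ) := ZMod L × ZMod L

/-- Spin configurations: `true` codes the spin `+1`, `false` codes `-1`. -/
abbrev Config (L : ℕ) := Site L → Bool

noncomputable section

/-- The real value of a spin. -/
def spin (b : Bool) : ℝ := if b then 1 else -1

def east (L : ℕ) : Site L := (1, 0)
def north (L : ℕ) : Site L := (0, 1)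

variable {L : ℕ}

/-- `S_σ(x)`: the sum of the spins of the four nearest neighbours of `x`. -/
def nnS (σ : Config L) (x : Site L) : ℝ :=
  spin (σ (x + east L)) + spin (σ (x - east L)) +
    spin (σ (x + north L)) + spin (σ (x - north L))

/-- Single-site heat-bath probability `p_x(a|σ)`. -/
def flipP (β h : ℝ) (σ : Config L) (x : Site L) (a : Bool) : ℝ :=
  1 / (1 + Real.exp (-2 * β * spin a * (nnS σ x + h)))

/-- The PCA transition matrix `P(σ,η) = ∏_x p_x(η(x)|σ)`. -/
def Pmat (β h : ℝ) [NeZero L] (σ η : Config L) : ℝ :=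
  ∏ x : Site L, flipP β h σ x (η x)

/-- The four-body Hamiltonian `H_β`. -/
def Ham (β h : ℝ) [NeZero L] (σ : Config L) : ℝ :=
  -(β * h) * ∑ x : Site L, spin (σ x)
    - ∑ x : Site L, Real.log (Real.cosh (β * (nnS σ x + h)))

/-- The zero-temperature energy `E`. -/
def En (h : ℝ) [NeZero L] (σ : Config L) : ℝ :=
  -h * ∑ x : Site L, spin (σ x) - ∑ x : Site L, |nnS σ x + h|

/-- The zero-temperature drift map `T`. -/
def T (h : ℝ) (σ : Config L) : Config L :=
  fun x => if 0 < nnS σ x + h then true else false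

def plusC (L : ℕ) : Config L := fun _ => true
def minusC (L : ℕ) : Config L := fun _ => false

/-- The even chessboard `C_e(x) = (-1)^(x₁+x₂)` (`true` at even-parity sites). -/
def chessE (L : ℕ) : Config L := fun x => decide ((x.1 + x.2).val % 2 = 0)
def chessO (L : ℕ) : Config L := fun x => !(chessE L x)
def chessSet (L : ℕ) : Set (Config L) := {chessE L, chessO L}

def IsChessCfg {L : ℕ} (C : Config L) : Prop := C = chessE L ∨ C = chessO L

/-- A trap: a stable configuration or an element of a stable pair. -/
def IsTrap (h : ℝ) (σ : Config L) : Prop := T h σ = σ ∨ T h (T h σ) = σ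

/-- The trap `σ̂` reached by the downhill path started at `σ`. -/
def hatTrap (h : ℝ) (σ : Config L) : Config L :=
  (T h)^[sInf {n | IsTrap h ((T h)^[n] σ)}] σ

/-- The basin of attraction `𝔅(ζ)` of a trap `ζ`. -/
def basin (h : ℝ) (ζ : Config L) : Set (Config L) := {σ | hatTrap h σ = ζ}

/-- The interior of a rectangle on the dual lattice: an `a × b` block of sites
with lower-left corner `c`. -/
def rect (c : Site L) (a b : ℕ) : Set (Site L) :=
  { y | ∃ i j : ℕ, i < a ∧ j < b ∧ y = c + ((i : ZMod L), (j : ZMod L)) }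

/-- The configuration equal to `ζ` inside the given rectangle and to `bg` outside. -/
def rectCfg (bg ζ : Config L) (c : Site L) (a b : ℕ) : Config L :=
  fun x => if x ∈ rect c a b then ζ x else bg x

/-- Differences between sites at euclidean distance at most `2` on the torus. -/
def closeDiff (d : Site L) : Prop :=
  ∃ u v : ℤ, u ^ 2 + v ^ 2 ≤ 4 ∧ d = ((u : ZMod L), (v : ZMod L))

/-- Two sets of sites are non-interacting iff all pairs of sites are at
euclidean distance `> 2` (equivalently `≥ √5`). -/
def NonInteracting (A B : Set (Site L)) : Prop :=
  ∀ x ∈ A, ∀ y ∈ B, ¬ closeDiff (y - x)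

/-- Nearest-neighbour adjacency on the torus. -/
def Adj (x y : Site L) : Prop :=
  y = x + east L ∨ y = x - east L ∨ y = x + north L ∨ y = x - north L

def stepSet : Set (ℤ × ℤ) := {(1, 0), (-1, 0), (0, 1), (0, -1)}

/-- `X` contains a nearest-neighbour loop winding around the torus
(a percolating, torus-wrapping, cluster is a cluster containing such a loop). -/
def Wrapping (X : Set (Site L)) : Prop :=
  ∃ (n : ℕ) (f : ℕ → Site L) (d : ℕ → ℤ × ℤ),
    0 < n ∧ f n = f 0 ∧ (∑ i ∈ Finset.range n, d i) ≠ 0 ∧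
    ∀ i < n, d i ∈ stepSet ∧
      f (i + 1) = f i + (((d i).1 : ZMod L), ((d i).2 : ZMod L)) ∧ f i ∈ X

/-- `σ` has a well defined sea of the homogeneous phase `α`. -/
def SeaHom (h : ℝ) (α σ : Config L) : Prop :=
  ∃ X : Set (Site L), Wrapping X ∧ (∀ x ∈ X, σ x = α x) ∧
    ∀ n : ℕ, 1 ≤ n → ∀ x ∈ X, (T h)^[n] σ x = α x

/-- `σ` has a well defined sea of the chessboard `C`. -/
def SeaChess (h : ℝ) (C σ : Config L) : Prop :=
  ∃ X : Set (Site L), Wrapping X ∧ (∀ x ∈ X, σ x = C x) ∧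
    ∀ n : ℕ, 1 ≤ n → ∀ x ∈ X, (T h)^[2 * n] σ x = C x

def SeaMinus (h : ℝ) (σ : Config L) : Prop := SeaHom h (minusC L) σ
def SeaPlus (h : ℝ) (σ : Config L) : Prop := SeaHom h (plusC L) σ
def SeaChessAny (h : ℝ) (σ : Config L) : Prop :=
  SeaChess h (chessE L) σ ∨ SeaChess h (chessO L) σ

/-- Communication height `H(σ,η) = H(σ) - log P(σ,η)`. -/
def commH (β h : ℝ) [NeZero L] (σ η : Config L) : ℝ :=
  Ham β h σ - Real.log (Pmat β h σ η)

/-- Minimal height (minmax) `Φ(σ,η)` over all paths from `σ` to `η`. -/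
def Phi (β h : ℝ) [NeZero L] (σ η : Config L) : ℝ :=
  sInf { v | ∃ (n : ℕ) (f : ℕ → Config L), 0 < n ∧ f 0 = σ ∧ f n = η ∧
    v = sSup { w | ∃ i < n, w = commH β h (f i) (f (i + 1)) } }

/-- The barrier `Υ(η) = min_{ζ ∉ 𝔅(η)} Φ(η,ζ)` to exit the basin of the trap `η`. -/
def Ups (β h : ℝ) [NeZero L] (η : Config L) : ℝ :=
  sInf { v | ∃ ζ : Config L, ζ ∉ basin h η ∧ v = Phi β h η ζ }

/-- Probability, starting from `σ0`, that the first visit to `E` happens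
at time `n` and at a state of `F`. -/
def firstHitP (β h : ℝ) [NeZero L] (σ0 : Config L) (E F : Set (Config L)) (n : ℕ) : ℝ :=
  ∑ f : Fin (n + 1) → Config L,
    if f 0 = σ0 ∧ (∀ i : Fin (n + 1), (i : ℕ) < n → f i ∉ E) ∧ f (Fin.last n) ∈ E ∩ F
    then ∏ i : Fin n, Pmat β h (f i.castSucc) (f i.succ) else 0

/-- `ℙ_{σ0}(τ_A < τ_B)`. -/
def probHitBefore (β h : ℝ) [NeZero L] (σ0 : Config L) (A B : Set (Config L)) : ℝ :=
  ∑' n : ℕ, firstHitP β h σ0 (A ∪ B) (A \ B) n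

/-- `ℙ_{σ0}(τ_D ∈ I)` (for `τ_D < ∞`). -/
def probTauIn (β h : ℝ) [NeZero L] (σ0 : Config L) (D : Set (Config L)) (I : Set ℝ) : ℝ :=
  ∑' n : ℕ, if (n : ℝ) ∈ I then firstHitP β h σ0 D Set.univ n else 0

/-- `ℙ_{σ0}(τ_D > t)` (including the event that `D` is never visited). -/
def probTauGT (β h : ℝ) [NeZero L] (σ0 : Config L) (D : Set (Config L)) (t : ℝ) : ℝ :=
  1 - probTauIn β h σ0 D (Set.Iic t)

/-- `ℙ_{σ0}(σ_{τ_E} ∈ F)`. -/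
def probFirstHitIn (β h : ℝ) [NeZero L] (σ0 : Config L) (E F : Set (Config L)) : ℝ :=
  ∑' n : ℕ, firstHitP β h σ0 E F n

/-- The critical length `λ = ⌊2/h⌋ + 1`. -/
def lam (h : ℝ) : ℕ := Nat.floor (2 / h) + 1

/-- The protocritical height `Γ = -2hλ² + 2λ(4+h) - 2h`. -/
def Gam (h : ℝ) : ℝ :=
  -2 * h * (lam h : ℝ) ^ 2 + 2 * (lam h : ℝ) * (4 + h) - 2 * h

/-- The geometric conditions of Proposition 3.3 (iii) for a trap in the sea of
minuses, with `s` chessboard rectangles (indices `< s`) and `k - s` plus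
rectangles (indices `≥ s`). -/
def MinusMultiSpec (h : ℝ) (σ : Config L) (s : ℕ) {k : ℕ}
    (c : Fin k → Site L) (a b : Fin k → ℕ) : Prop :=
  1 ≤ k ∧ s ≤ k ∧
  (∀ i, 2 ≤ min (a i) (b i) ∧ max (a i) (b i) ≤ L - 2) ∧
  (∀ i j, i ≠ j → Disjoint (rect (c i) (a i) (b i)) (rect (c j) (a j) (b j))) ∧
  (∀ j i : Fin k, (j : ℕ) < s → s ≤ (i : ℕ) →
    NonInteracting (rect (c j) (a j) (b j)) (rect (c i) (a i) (b i))) ∧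
  (∀ i j : Fin k, s ≤ (i : ℕ) → s ≤ (j : ℕ) → i ≠ j →
    NonInteracting (rect (c i) (a i) (b i)) (rect (c j) (a j) (b j))) ∧
  (∀ x, (∀ i, x ∉ rect (c i) (a i) (b i)) → σ x = false) ∧
  (∀ i : Fin k, s ≤ (i : ℕ) → ∀ x ∈ rect (c i) (a i) (b i), σ x = true) ∧
  ∃ Cp : Fin k → Config L,
    (∀ j : Fin k, (j : ℕ) < s → IsChessCfg (Cp j) ∧
      ∃ (k' : ℕ) (c' : Fin k' → Site L) (a' b' : Fin k' → ℕ),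
        (∀ i, rect (c' i) (a' i) (b' i) ⊆ rect (c j) (a j) (b j)) ∧
        (∀ i i', i ≠ i' →
          NonInteracting (rect (c' i) (a' i) (b' i)) (rect (c' i') (a' i') (b' i'))) ∧
        (∀ i, ∀ x ∈ rect (c' i) (a' i) (b' i), σ x = true) ∧
        (∀ x ∈ rect (c j) (a j) (b j),
          (∀ i, x ∉ rect (c' i) (a' i) (b' i)) → σ x = Cp j x)) ∧
    (∀ i j : Fin k, (i : ℕ) < s → (j : ℕ) < s → i ≠ j → Cp i = Cp j →
      NonInteracting (rect (c i) (a i) (b i)) (rect (c j) (a j) (b j)))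

/-- `η ∈ 𝒪_{-1}` (a `(λ-1) × λ` chessboard droplet in the sea of minuses) and
`ζ ∈ π_{-1}(η)` is one of its protocritical droplets. -/
def ProtoRel (h : ℝ) (η ζ : Config L) : Prop :=
  ∃ (c : Site L) (a b : ℕ) (C : Config L) (y z : Site L),
    IsChessCfg C ∧
    ((a = lam h - 1 ∧ b = lam h) ∨ (a = lam h ∧ b = lam h - 1)) ∧
    (∀ x ∈ rect c a b, η x = C x) ∧ (∀ x ∉ rect c a b, η x = false) ∧
    y ∉ rect c a b ∧ z ∈ rect c a b ∧ Adj y z ∧ C z = true ∧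
    (∀ x ∈ rect c a b, ζ x = !(C x)) ∧ ζ y = true ∧
    (∀ x, x ∉ rect c a b → x ≠ y → ζ x = false)

/-- The set `𝒪_{-1}` of `(λ-1) × λ` chessboard droplets in the sea of minuses. -/
def OSet (h : ℝ) (L : ℕ) : Set (Config L) :=
  { η | ∃ (c : Site L) (a b : ℕ) (C : Config L),
      IsChessCfg C ∧ ((a = lam h - 1 ∧ b = lam h) ∨ (a = lam h ∧ b = lam h - 1)) ∧
      (∀ x ∈ rect c a b, η x = C x) ∧ (∀ x ∉ rect c a b, η x = false) }

/-- The set `𝒫_{-1}` of protocritical droplets. -/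
def ProtoSet (h : ℝ) (L : ℕ) : Set (Config L) := { ζ | ∃ η, ProtoRel h η ζ }

end

/-!
Writing `|S_σ(x) + h| = Tσ(x) (S_σ(x) + h)` gives
`E(σ) = -h ∑ₓ (σ(x) + Tσ(x)) - ∑ₓ Tσ(x) S_σ(x)`. The last sum is the nearest-neighbour
interaction between `σ` and `Tσ`, symmetric in the two configurations by translation
invariance of the torus, so `E(σ)` is a symmetric function of the pair `(σ, Tσ)`;
when `T(Tσ) = σ`, the pair `(Tσ, T(Tσ))` is the same pair with the roles exchanged.
-/

lemma sum_mul_comp_add {G : Type*} [AddGroup G] [Fintype G] (f g : G → ℝ) (e : G) :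
    ∑ x, f x * g (x + e) = ∑ x, f (x - e) * g x :=
  Fintype.sum_equiv (Equiv.addRight e) _ _ fun x => by simp

section

variable {L : ℕ}

lemma abs_nnS_add_eq_spin_T_mul (h : ℝ) (σ : Config L) (x : Site L) :
    |nnS σ x + h| = spin (T h σ x) * (nnS σ x + h) := by
  by_cases hpos : 0 < nnS σ x + h
  · simp [T, spin, hpos, abs_of_pos hpos]
  · simp [T, spin, hpos, abs_of_nonpos (not_lt.mp hpos)]

variable [NeZero L]

lemma sum_spin_mul_nnS_comm (σ η : Config L) :
    ∑ x, spin (η x) * nnS σ x = ∑ x, spin (σ x) * nnS η x := by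
  have shift := sum_mul_comp_add (fun x => spin (η x)) (fun x => spin (σ x))
  have hE := shift (east L)
  have hE' := shift (-east L)
  have hN := shift (north L)
  have hN' := shift (-north L)
  simp only [sub_neg_eq_add, ← sub_eq_add_neg] at hE' hN'
  simp only [nnS, mul_add, Finset.sum_add_distrib]
  simp only [mul_comm (spin (σ _))]
  linarith

def pairEnergy (h : ℝ) (σ η : Config L) : ℝ :=
  -h * ∑ x, (spin (σ x) + spin (η x)) - ∑ x, spin (η x) * nnS σ x

lemma pairEnergy_comm (h : ℝ) (σ η : Config L) : pairEnergy h σ η = pairEnergy h η σ := by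
  rw [pairEnergy, pairEnergy, sum_spin_mul_nnS_comm σ η]
  simp only [add_comm (spin (σ _))]

lemma En_eq_pairEnergy_T (h : ℝ) (σ : Config L) : En h σ = pairEnergy h σ (T h σ) := by
  have hsum : ∑ x, |nnS σ x + h| = ∑ x, spin (T h σ x) * nnS σ x + h * ∑ x, spin (T h σ x) := by
    rw [Finset.mul_sum, ← Finset.sum_add_distrib]
    exact Finset.sum_congr rfl fun x _ => by rw [abs_nnS_add_eq_spin_T_mul]; ring
  rw [En, pairEnergy, hsum, Finset.sum_add_distrib]
  ring

end

theorem stable_pair_equal_energy_general (L : ℕ) [NeZero L] (h : ℝ)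
    (σ : Config L)
    (hpair : T h (T h σ) = σ) :
    En h σ = En h (T h σ) := by
  calc En h σ = pairEnergy h σ (T h σ) := En_eq_pairEnergy_T h σ
    _ = pairEnergy h (T h σ) σ := pairEnergy_comm h σ (T h σ)
    _ = En h (T h σ) := by rw [En_eq_pairEnergy_T, hpair]

/-- if `(σ, Tσ)` is a stable pair then `σ` and `Tσ` have the
same energy. -/
theorem stable_pair_equal_energy (L : ℕ) [NeZero L] (h : ℝ)
    (h0 : 0 < h) (h2 : h < 2) (σ : Config L)
    (hne : T h σ ≠ σ) (hpair : T h (T h σ) = σ) :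
    En h σ = En h (T h σ) :=
  stable_pair_equal_energy_general L h σ hpair

end PCA
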